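/- arXiv:2409.00276 — 2 statements merged into one kernel-verified Lean document; each statement's English description precedes it below -/
import Mathlib

section
/- Suppose the basis dimension is m = 1, so f : ℝⁿ → ℝ and f(x_t) ∈ ℝ for each t. Then the ground-truth matrix Ā ∈ ℝ^{n×1} is a global minimizer over A ∈ ℝ^{n×1} of the loss g(A) = Σ_{t=0}^{T−1} ‖(Ā − A) f(x_t) + d̄_t‖₂ if and only if ‖Σ_{t∈K} f(x_t) d̂_t‖₂ ≤ Σ_{t∈K^c} |f(x_t)|. -/
/-!
With `b` the column of `Ā - A` and `c t = f (x t)`, the loss is `b ↦ ∑ ‖c t • b + d t‖`, and `Ā` is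
optimal iff `b = 0` minimises it. A term with `d t ≠ 0` lies between its linearisation
`‖d t‖ + c t ⟪b, d̂ t⟫` and that linearisation plus `c t ^ 2 ‖b‖ ^ 2 / (2 ‖d t‖)`; a term with
`d t = 0` is `|c t| ‖b‖`. With `σ = ∑ c t • d̂ t` and `C = ∑_{d t = 0} |c t|`, the lower bound and
Cauchy–Schwarz give sufficiency of `‖σ‖ ≤ C`; the upper bound at `b = -ε • σ`, as `ε → 0`, gives
its necessity.
-/

open Matrix
open scoped BigOperators Classical

/-- Euclidean norm of a vector in `ℝ^k`. -/
noncomputable def e2norm {k : ℕ} (v : Fin k → ℝ) : ℝ := Real.sqrt (∑ i, (v i) ^ 2)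

/-- Normalized attack direction `d̂ = d / ‖d‖₂`. -/
noncomputable def dhat {k : ℕ} (v : Fin k → ℝ) : Fin k → ℝ := (e2norm v)⁻¹ • v

lemma nonpos_of_forall_pos_le_mul {a M : ℝ} (h : ∀ ε > 0, a ≤ ε * M) : a ≤ 0 := by
  have hlim : Filter.Tendsto (fun ε : ℝ => ε * M) (nhdsWithin 0 (Set.Ioi 0)) (nhds 0) := by
    simpa using (continuous_id.mul continuous_const).continuousWithinAt.tendsto (x := (0 : ℝ))
      (s := Set.Ioi 0) (f := fun ε : ℝ => ε * M)
  exact ge_of_tendsto hlim (eventually_nhdsWithin_of_forall h)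

open RealInnerProductSpace

section InnerProductSpace

variable {E : Type*} [NormedAddCommGroup E] [InnerProductSpace ℝ E]

lemma norm_add_real_inner_normalize_le_norm_add (w d : E) :
    ‖d‖ + ⟪w, ‖d‖⁻¹ • d⟫ ≤ ‖w + d‖ := by
  rcases eq_or_ne d 0 with rfl | hd
  · simp
  have hself : ⟪d, ‖d‖⁻¹ • d⟫ = ‖d‖ := by
    rw [real_inner_smul_right, real_inner_self_eq_norm_sq]
    field_simp
  calc ‖d‖ + ⟪w, ‖d‖⁻¹ • d⟫ = ⟪w + d, ‖d‖⁻¹ • d⟫ := by rw [inner_add_left, hself, add_comm]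
    _ ≤ ‖w + d‖ * ‖‖d‖⁻¹ • d‖ := real_inner_le_norm _ _
    _ = ‖w + d‖ := by rw [norm_smul, norm_inv, norm_norm, inv_mul_cancel₀ (norm_ne_zero_iff.mpr hd),
        mul_one]

lemma norm_add_le_norm_add_real_inner_normalize_add (w d : E) (hd : d ≠ 0) :
    ‖w + d‖ ≤ ‖d‖ + ⟪w, ‖d‖⁻¹ • d⟫ + ‖w‖ ^ 2 / (2 * ‖d‖) := by
  have hsq : ‖w + d‖ ^ 2 = ‖w‖ ^ 2 + 2 * ⟪w, d⟫ + ‖d‖ ^ 2 := norm_add_sq_real w d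
  -- the gap is `(‖w + d‖ - ‖d‖) ^ 2 / (2 * ‖d‖)`
  have hgap : ‖d‖ + ⟪w, ‖d‖⁻¹ • d⟫ + ‖w‖ ^ 2 / (2 * ‖d‖) - ‖w + d‖
      = (‖w + d‖ - ‖d‖) ^ 2 / (2 * ‖d‖) := by
    rw [real_inner_smul_right]
    field_simp
    linear_combination -hsq
  rw [← sub_nonneg, hgap]
  positivity

variable {ι : Type*} (s : Finset ι) (c : ι → ℝ) (d : ι → E)

lemma sum_norm_add_real_inner_add_le_sum_norm_smul_add (b : E) :
    ∑ t ∈ s, ‖d t‖ + ⟪b, ∑ t ∈ s, c t • (‖d t‖⁻¹ • d t)⟫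
        + (∑ t ∈ s with d t = 0, |c t|) * ‖b‖
      ≤ ∑ t ∈ s, ‖c t • b + d t‖ := by
  rw [inner_sum, Finset.sum_filter, Finset.sum_mul, ← Finset.sum_add_distrib,
    ← Finset.sum_add_distrib]
  refine Finset.sum_le_sum fun t _ => ?_
  rcases eq_or_ne (d t) 0 with hd | hd
  · simp [hd, norm_smul]
  · simpa [hd, real_inner_smul_left, real_inner_smul_right, mul_left_comm (c t)]
      using norm_add_real_inner_normalize_le_norm_add (c t • b) (d t)

lemma sum_norm_smul_add_le_sum_norm_add_real_inner_add (b : E) :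
    ∑ t ∈ s, ‖c t • b + d t‖
      ≤ ∑ t ∈ s, ‖d t‖ + ⟪b, ∑ t ∈ s, c t • (‖d t‖⁻¹ • d t)⟫
        + (∑ t ∈ s with d t = 0, |c t|) * ‖b‖ + (∑ t ∈ s, c t ^ 2 / (2 * ‖d t‖)) * ‖b‖ ^ 2 := by
  rw [inner_sum, Finset.sum_filter, Finset.sum_mul, Finset.sum_mul, ← Finset.sum_add_distrib,
    ← Finset.sum_add_distrib, ← Finset.sum_add_distrib]
  refine Finset.sum_le_sum fun t _ => ?_
  rcases eq_or_ne (d t) 0 with hd | hd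
  · simp [hd, norm_smul]
  · have := norm_add_le_norm_add_real_inner_normalize_add (c t • b) (d t) hd
    rw [norm_smul, mul_pow, Real.norm_eq_abs, sq_abs, real_inner_smul_left] at this
    simp only [hd, if_false, zero_mul, add_zero, real_inner_smul_right] at this ⊢
    linarith [this, mul_div_right_comm (c t ^ 2) (‖b‖ ^ 2) (2 * ‖d t‖)]

theorem forall_sum_norm_le_sum_norm_smul_add_iff :
    (∀ b : E, ∑ t ∈ s, ‖d t‖ ≤ ∑ t ∈ s, ‖c t • b + d t‖) ↔
      ‖∑ t ∈ s with d t ≠ 0, c t • (‖d t‖⁻¹ • d t)‖ ≤ ∑ t ∈ s with d t = 0, |c t| := by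
  rw [Finset.sum_filter_of_ne (p := fun t => d t ≠ 0) fun t _ h hd => h (by simp [hd])]
  set σ := ∑ t ∈ s, c t • (‖d t‖⁻¹ • d t)
  set C := ∑ t ∈ s with d t = 0, |c t|
  constructor
  · intro hmin
    have hC : 0 ≤ C := Finset.sum_nonneg fun t _ => abs_nonneg (c t)
    -- moving to `-ε • σ` lowers the loss by `ε ‖σ‖ (‖σ‖ - C)` up to `O(ε ^ 2)`
    have hdesc : ‖σ‖ * (‖σ‖ - C) ≤ 0 := by
      refine nonpos_of_forall_pos_le_mul
        (M := (∑ t ∈ s, c t ^ 2 / (2 * ‖d t‖)) * ‖σ‖ ^ 2) fun ε hε => ?_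
      have hle := (hmin (-ε • σ)).trans (sum_norm_smul_add_le_sum_norm_add_real_inner_add s c d _)
      rw [real_inner_smul_left, real_inner_self_eq_norm_sq, norm_smul, Real.norm_eq_abs,
        abs_neg, abs_of_pos hε] at hle
      refine le_of_mul_le_mul_left ?_ hε
      nlinarith [hle]
    nlinarith [norm_nonneg σ]
  · intro hσ b
    have hcs : -(‖b‖ * ‖σ‖) ≤ ⟪b, σ⟫ := neg_le_of_abs_le (abs_real_inner_le_norm b σ)
    nlinarith [sum_norm_add_real_inner_add_le_sum_norm_smul_add s c d b,
      mul_le_mul_of_nonneg_left hσ (norm_nonneg b)]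

end InnerProductSpace

lemma e2norm_eq_norm_toLp {k : ℕ} (v : Fin k → ℝ) : e2norm v = ‖WithLp.toLp 2 v‖ := by
  simp [e2norm, EuclideanSpace.norm_eq]

lemma toLp_dhat {k : ℕ} (v : Fin k → ℝ) :
    WithLp.toLp 2 (dhat v) = ‖WithLp.toLp 2 v‖⁻¹ • WithLp.toLp 2 v := by
  rw [dhat, WithLp.toLp_smul, e2norm_eq_norm_toLp]

lemma mulVec_const_eq_smul_col {m α : Type*} [CommSemiring α] (B : Matrix m (Fin 1) α) (r : α) :
    B *ᵥ (fun _ => r) = r • fun i => B i 0 := by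
  ext i
  simp [mulVec, dotProduct, mul_comm]

lemma forall_toLp_col_sub_iff {m α : Type*} [AddCommGroup α] (p : ENNReal) (B : Matrix m (Fin 1) α)
    (P : WithLp p (m → α) → Prop) :
    (∀ A : Matrix m (Fin 1) α, P (WithLp.toLp p fun i => (B - A) i 0)) ↔ ∀ v, P v :=
  ⟨fun h v => by simpa [sub_sub_cancel] using h (B - replicateCol (Fin 1) v.ofLp), fun h _ => h _⟩

theorem groundTruth_isGlobalMin_iff_one_dim_general
    (T n : ℕ)
    (f : (Fin n → ℝ) → ℝ)
    (Abar : Matrix (Fin n) (Fin 1) ℝ)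
    (d : ℕ → (Fin n → ℝ)) (x : ℕ → (Fin n → ℝ)) :
    (∀ A : Matrix (Fin n) (Fin 1) ℝ,
        ∑ t ∈ Finset.range T, e2norm ((Abar - Abar).mulVec (fun _ => f (x t)) + d t) ≤
          ∑ t ∈ Finset.range T, e2norm ((Abar - A).mulVec (fun _ => f (x t)) + d t))
      ↔
    e2norm (∑ t ∈ (Finset.range T).filter (fun t => d t ≠ 0), f (x t) • dhat (d t)) ≤
      ∑ t ∈ (Finset.range T).filter (fun t => d t = 0), |f (x t)| := by
  have hloss : ∀ (A : Matrix (Fin n) (Fin 1) ℝ) (t : ℕ),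
      e2norm ((Abar - A).mulVec (fun _ => f (x t)) + d t)
        = ‖f (x t) • WithLp.toLp 2 (fun i => (Abar - A) i 0) + WithLp.toLp 2 (d t)‖ := by
    intro A t
    rw [mulVec_const_eq_smul_col, e2norm_eq_norm_toLp, WithLp.toLp_add, WithLp.toLp_smul]
  simp only [hloss, sub_self, zero_mulVec, zero_add, e2norm_eq_norm_toLp]
  rw [forall_toLp_col_sub_iff 2 Abar fun b => ∑ t ∈ Finset.range T, ‖WithLp.toLp 2 (d t)‖ ≤
      ∑ t ∈ Finset.range T, ‖f (x t) • b + WithLp.toLp 2 (d t)‖,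
    forall_sum_norm_le_sum_norm_smul_add_iff]
  simp only [WithLp.toLp_sum, WithLp.toLp_smul, toLp_dhat, ne_eq, WithLp.toLp_eq_zero]

/-- Corollary 2.3 for basis dimension `m = 1`.
With `f : ℝⁿ → ℝ`, `Ā ∈ ℝ^{n×1}` is a global minimizer of
`g(A) = Σ_{t<T} ‖(Ā − A) f(x_t) + d̄_t‖₂` iff
`‖Σ_{t∈K} f(x_t) d̂_t‖₂ ≤ Σ_{t∈K^c} |f(x_t)|`. -/
theorem groundTruth_isGlobalMin_iff_one_dim
    (T n : ℕ) (hT : 0 < T) (hn : 0 < n)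
    (f : (Fin n → ℝ) → ℝ)
    (Abar : Matrix (Fin n) (Fin 1) ℝ)
    (d : ℕ → (Fin n → ℝ)) (x : ℕ → (Fin n → ℝ))
    (hx0 : x 0 = 0)
    (hxstep : ∀ t < T, x (t + 1) = Abar.mulVec (fun _ => f (x t)) + d t) :
    (∀ A : Matrix (Fin n) (Fin 1) ℝ,
        ∑ t ∈ Finset.range T, e2norm ((Abar - Abar).mulVec (fun _ => f (x t)) + d t) ≤
          ∑ t ∈ Finset.range T, e2norm ((Abar - A).mulVec (fun _ => f (x t)) + d t))
      ↔
    e2norm (∑ t ∈ (Finset.range T).filter (fun t => d t ≠ 0), f (x t) • dhat (d t)) ≤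
      ∑ t ∈ (Finset.range T).filter (fun t => d t = 0), |f (x t)| :=
  groundTruth_isGlobalMin_iff_one_dim_general T n f Abar d x
end

section
/- Let d̂ ∈ ℝⁿ be a unit vector (‖d̂‖₂ = 1), let Ā ∈ ℝ^{n×n}, d̄ ∈ ℝⁿ, and let Δ ≥ 2 be an integer. Then the following are equivalent: (i) for every matrix Z ∈ ℝ^{n×n}, d̂ᵀ Z Ā^{Δ−1} d̄ ≤ Σ_{t=0}^{Δ−2} ‖Z Ā^{t} d̄‖₂; (ii) for every vector z ∈ ℝⁿ, zᵀ Ā^{Δ−1} d̄ ≤ Σ_{t=0}^{Δ−2} |zᵀ Ā^{t} d̄|. -/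
/-! One direction is the specialisation `Z = d̂ zᵀ`, for which `d̂ᵀ Z x = zᵀ x` and
`‖Z x‖₂ = |zᵀ x|` because `‖d̂‖₂ = 1`. Conversely, a general `Z` is tested by `z = Zᵀ d̂`:
then `d̂ᵀ Z x = zᵀ x`, and Cauchy–Schwarz gives `|zᵀ x| ≤ ‖d̂‖₂ ‖Z x‖₂ = ‖Z x‖₂`. -/

open Matrix
open scoped BigOperators

lemma e2norm_eq_norm {k : ℕ} (v : Fin k → ℝ) :
    e2norm v = ‖(WithLp.toLp 2 v : EuclideanSpace ℝ (Fin k))‖ := by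
  simp [e2norm, EuclideanSpace.norm_eq]

lemma e2norm_smul {k : ℕ} (c : ℝ) (v : Fin k → ℝ) : e2norm (c • v) = |c| * e2norm v := by
  simp only [e2norm_eq_norm, WithLp.toLp_smul, norm_smul, Real.norm_eq_abs]

lemma abs_dotProduct_le_e2norm_mul {k : ℕ} (v w : Fin k → ℝ) :
    |v ⬝ᵥ w| ≤ e2norm v * e2norm w := by
  simpa [e2norm_eq_norm, EuclideanSpace.inner_toLp_toLp, dotProduct_comm] using
    abs_real_inner_le_norm (WithLp.toLp 2 v : EuclideanSpace ℝ (Fin k)) (WithLp.toLp 2 w)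

lemma dotProduct_self_eq_e2norm_sq {k : ℕ} (v : Fin k → ℝ) : v ⬝ᵥ v = e2norm v ^ 2 := by
  rw [e2norm, Real.sq_sqrt (Finset.sum_nonneg fun i _ => sq_nonneg (v i))]
  simp only [dotProduct, sq]

theorem forall_dotProduct_mulVec_le_sum_e2norm_iff {m n : ℕ} {ι : Type*} (s : Finset ι)
    (dh : Fin m → ℝ) (hdh : e2norm dh = 1) (w : Fin n → ℝ) (v : ι → Fin n → ℝ) :
    (∀ Z : Matrix (Fin m) (Fin n) ℝ, dh ⬝ᵥ Z *ᵥ w ≤ ∑ t ∈ s, e2norm (Z *ᵥ v t)) ↔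
      ∀ z : Fin n → ℝ, z ⬝ᵥ w ≤ ∑ t ∈ s, |z ⬝ᵥ v t| := by
  have rank_one_mulVec (z x : Fin n → ℝ) : vecMulVec dh z *ᵥ x = (z ⬝ᵥ x) • dh := by
    rw [vecMulVec_mulVec, op_smul_eq_smul]
  have hdhdh : dh ⬝ᵥ dh = 1 := by rw [dotProduct_self_eq_e2norm_sq, hdh, one_pow]
  constructor
  · intro h z
    simpa only [rank_one_mulVec, dotProduct_smul, smul_eq_mul, hdhdh, mul_one, e2norm_smul, hdh]
      using h (vecMulVec dh z)
  · intro h Z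
    calc dh ⬝ᵥ Z *ᵥ w = (dh ᵥ* Z) ⬝ᵥ w := dotProduct_mulVec _ _ _
      _ ≤ ∑ t ∈ s, |(dh ᵥ* Z) ⬝ᵥ v t| := h _
      _ ≤ ∑ t ∈ s, e2norm (Z *ᵥ v t) := Finset.sum_le_sum fun t _ => by
        simpa only [← dotProduct_mulVec, hdh, one_mul] using
          abs_dotProduct_le_e2norm_mul dh (Z *ᵥ v t)

theorem rank_one_reduction_general
    (n : ℕ) (dh : Fin n → ℝ) (hdh : e2norm dh = 1)
    (Abar : Matrix (Fin n) (Fin n) ℝ) (db : Fin n → ℝ)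
    (Δ : ℕ) :
    (∀ Z : Matrix (Fin n) (Fin n) ℝ,
        dh ⬝ᵥ Z.mulVec ((Abar ^ (Δ - 1)).mulVec db) ≤
          ∑ t ∈ Finset.range (Δ - 1), e2norm (Z.mulVec ((Abar ^ t).mulVec db)))
      ↔
    (∀ z : Fin n → ℝ,
        z ⬝ᵥ (Abar ^ (Δ - 1)).mulVec db ≤
          ∑ t ∈ Finset.range (Δ - 1), |z ⬝ᵥ (Abar ^ t).mulVec db|) :=
  forall_dotProduct_mulVec_le_sum_e2norm_iff _ dh hdh _ fun t => (Abar ^ t) *ᵥ db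

/-- rank-one reduction for Δ-spaced attacks on linear systems.
For a unit vector `d̂ ∈ ℝⁿ`, `Ā ∈ ℝ^{n×n}`, `d̄ ∈ ℝⁿ` and an integer `Δ ≥ 2`:
`∀ Z, d̂ᵀ Z Ā^{Δ−1} d̄ ≤ Σ_{t=0}^{Δ−2} ‖Z Ā^t d̄‖₂` holds iff
`∀ z, zᵀ Ā^{Δ−1} d̄ ≤ Σ_{t=0}^{Δ−2} |zᵀ Ā^t d̄|`. -/
theorem rank_one_reduction
    (n : ℕ) (dh : Fin n → ℝ) (hdh : e2norm dh = 1)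
    (Abar : Matrix (Fin n) (Fin n) ℝ) (db : Fin n → ℝ)
    (Δ : ℕ) (hΔ : 2 ≤ Δ) :
    (∀ Z : Matrix (Fin n) (Fin n) ℝ,
        dh ⬝ᵥ Z.mulVec ((Abar ^ (Δ - 1)).mulVec db) ≤
          ∑ t ∈ Finset.range (Δ - 1), e2norm (Z.mulVec ((Abar ^ t).mulVec db)))
      ↔
    (∀ z : Fin n → ℝ,
        z ⬝ᵥ (Abar ^ (Δ - 1)).mulVec db ≤
          ∑ t ∈ Finset.range (Δ - 1), |z ⬝ᵥ (Abar ^ t).mulVec db|) :=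
  rank_one_reduction_general n dh hdh Abar db Δ
end
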